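/- Let k ∈ ℕ and let x be an H-valued random variable measurable with respect to the σ-algebra generated by i_0, …, i_{k−1}. Then, P-almost surely: E[‖x^{k+1} − x‖²_W | i_0, …, i_{k−1}] − ‖x^k − x‖²_W = ‖x̄^{k+1} − x‖²_{Γ⁻¹} − ‖x^k − x‖²_{Γ⁻¹}, and E[‖x^{k+1} − x^k‖²_W | i_0, …, i_{k−1}] = ‖x̄^{k+1} − x^k‖²_{Γ⁻¹}. -/

import Mathlib

open MeasureTheory ProbabilityTheory Filter Topology Set
open scoped BigOperators RealInnerProductSpace ENNReal

noncomputable section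

set_option synthInstance.maxHeartbeats 400000
set_option maxHeartbeats 1000000

variable {m : ℕ} {H : Fin m → Type*}
  [∀ i, NormedAddCommGroup (H i)] [∀ i, InnerProductSpace ℝ (H i)]

/-- The Hilbert direct sum `H = H₁ ⊕ ⋯ ⊕ H_m` is complete when each factor is. -/
instance [∀ i, CompleteSpace (H i)] : CompleteSpace (PiLp 2 H) :=
  inferInstance

/-- Weighted squared norm `∑ i, w i * ‖u i‖²` on the direct sum. -/
def wnormSq (w : Fin m → ℝ) (u : PiLp 2 H) : ℝ := ∑ i, w i * ‖u i‖ ^ 2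

/-- Weighted inner product `∑ i, w i * ⟪u i, v i⟫` on the direct sum. -/
def winner (w : Fin m → ℝ) (u v : PiLp 2 H) : ℝ := ∑ i, w i * ⟪u i, v i⟫

/-- `upd x i u` replaces the `i`-th coordinate of `x` by `u`. -/
def upd (x : PiLp 2 H) (i : Fin m) (u : H i) : PiLp 2 H := WithLp.toLp 2 (Function.update x i u)

/-- `IsProx c gi v pt` asserts that `pt` is the unique minimizer of
`u ↦ gi u + (1/(2c))‖u − v‖²`, i.e. `pt = prox_{c·gi}(v)`. -/
def IsProx {E : Type*} [NormedAddCommGroup E] (c : ℝ) (gi : E → ℝ) (v pt : E) : Prop :=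
  (∀ u : E, gi pt + 1 / (2 * c) * ‖pt - v‖ ^ 2 ≤ gi u + 1 / (2 * c) * ‖u - v‖ ^ 2) ∧
  (∀ u : E, gi u + 1 / (2 * c) * ‖u - v‖ ^ 2 ≤ gi pt + 1 / (2 * c) * ‖pt - v‖ ^ 2 → u = pt)

/-- The objective `F = f + g`, where `g x = ∑ i, g i (x i)`. -/
def Fobj (f : PiLp 2 H → ℝ) (g : ∀ i, H i → ℝ) (z : PiLp 2 H) : ℝ := f z + ∑ i, g i (z i)

/-- Delayed iterate `x̂^k`, coordinate `j` reads `x^{k - d^k_j}` (deterministic trajectory,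
indices in `ℤ`, with `x^n = x^0` for `n ≤ 0`). -/
def xhatD (x : ℤ → PiLp 2 H) (d : ℕ → Fin m → ℕ) (k : ℕ) : PiLp 2 H :=
  WithLp.toLp 2 fun j => x ((k : ℤ) - d k j) j

/-- Delayed iterate `x̂^k` (random trajectory). -/
def xhatP {Ω : Type*} (x : ℤ → Ω → PiLp 2 H) (d : ℕ → Fin m → ℕ) (k : ℕ) (ω : Ω) :
    PiLp 2 H :=
  WithLp.toLp 2 fun j => x ((k : ℤ) - d k j) ω j

/-- `alphaT c τ x k = c * ∑_{h=k-τ}^{k-1} (h-(k-τ)+1) ‖x^{h+1} - x^h‖²`. -/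
def alphaT (c : ℝ) (τ : ℕ) (x : ℤ → PiLp 2 H) (k : ℕ) : ℝ :=
  c * ∑ j ∈ Finset.range τ,
    ((j : ℝ) + 1) * ‖x ((k : ℤ) - τ + j + 1) - x ((k : ℤ) - τ + j)‖ ^ 2

/-- `alphaV p c τ x k ω = c * ∑_{h=k-τ}^{k-1} (h-(k-τ)+1) ‖x^{h+1} - x^h‖²_V`. -/
def alphaV {Ω : Type*} (p : Fin m → ℝ) (c : ℝ) (τ : ℕ) (x : ℤ → Ω → PiLp 2 H)
    (k : ℕ) (ω : Ω) : ℝ :=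
  c * ∑ j ∈ Finset.range τ,
    ((j : ℝ) + 1) * wnormSq p (x ((k : ℤ) - τ + j + 1) ω - x ((k : ℤ) - τ + j) ω)

/-- The constant `L_res^V/(2√p_max)` appearing in `α_k`, where `L_res^V = L_res √(p_max/p_min)`. -/
def alphaConst (Lres pmax pmin : ℝ) : ℝ :=
  Lres * Real.sqrt (pmax / pmin) / (2 * Real.sqrt pmax)

/-- The σ-algebra generated by `i_0, …, i_{k-1}`. -/
def pastFiltration {Ω : Type*} [MeasurableSpace Ω] (idx : ℕ → Ω → Fin m) (k : ℕ) :
    MeasurableSpace Ω :=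
  ⨆ j ∈ Finset.range k, MeasurableSpace.comap (idx j) ⊤

/-- The random index set `J(k) = {h ∈ {k-τ,…,k-1} : d^k_{i_h} ≥ k-h}`. -/
def Jset {Ω : Type*} (idx : ℕ → Ω → Fin m) (d : ℕ → Fin m → ℕ) (τ k : ℕ) (ω : Ω) :
    Finset ℕ :=
  (Finset.Ico (k - τ) k).filter fun h => k - h ≤ d k (idx h ω)

/-!
The iterates `x^k` and `x̄^{k+1}` are functions of the past indices `(i_0, …, i_{k-1})`: by
induction on `k`, since a prox point is unique and the update only reads earlier iterates. The past
σ-algebra is generated by this finite-valued vector, so functions of it are bounded and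
past-measurable, and `i_k`, being independent of the past with law `p`, is averaged out:
`E[a_{i_k} | past] = ∑ i, p i * a_i` for any past-measurable family `a`. For
`a_i = ‖upd x^k i x̄^{k+1}_i - x‖²_W` only coordinate `i` moves, and the weight `(p_i γ_i)⁻¹`
multiplied by `p_i` becomes `γ_i⁻¹`.
-/

lemma IsProx.unique {E : Type*} [NormedAddCommGroup E] {c : ℝ} {gi : E → ℝ} {v pt pt' : E}
    (h : IsProx c gi v pt) (h' : IsProx c gi v pt') : pt = pt' :=
  h'.2 pt (h.1 pt')

section WeightedNorm

variable {n : ℕ} {E : Fin n → Type*} [∀ i, NormedAddCommGroup (E i)]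

lemma wnormSq_zero (w : Fin n → ℝ) : wnormSq w (0 : PiLp 2 E) = 0 := by
  simp [wnormSq]

lemma wnormSq_upd_sub (w : Fin n → ℝ) (x z : PiLp 2 E) (i : Fin n) (u : E i) :
    wnormSq w (upd x i u - z) = wnormSq w (x - z) + w i * (‖u - z i‖ ^ 2 - ‖x i - z i‖ ^ 2) := by
  have hterm : ∀ j, w j * ‖(upd x i u - z) j‖ ^ 2 = w j * ‖(x - z) j‖ ^ 2 +
      if j = i then w i * (‖u - z i‖ ^ 2 - ‖x i - z i‖ ^ 2) else 0 := by
    intro j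
    rcases eq_or_ne j i with rfl | hji
    · simp [upd]; ring
    · simp [upd, hji]
  simp only [wnormSq, hterm, Finset.sum_add_distrib, Finset.sum_ite_eq', Finset.mem_univ, if_true]

lemma sum_mul_wnormSq_upd_sub {p γ : Fin n → ℝ} (hp : ∀ i, p i ≠ 0) (hp_sum : ∑ i, p i = 1)
    (x xbar z : PiLp 2 E) :
    ∑ i, p i * wnormSq (fun i => (p i * γ i)⁻¹) (upd x i (xbar i) - z)
      = wnormSq (fun i => (p i * γ i)⁻¹) (x - z)
        + (wnormSq (fun i => (γ i)⁻¹) (xbar - z) - wnormSq (fun i => (γ i)⁻¹) (x - z)) := by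
  simp only [wnormSq_upd_sub, mul_add, Finset.sum_add_distrib, ← Finset.sum_mul, hp_sum, one_mul]
  congr 1
  simp only [wnormSq, ← Finset.sum_sub_distrib, PiLp.sub_apply]
  refine Finset.sum_congr rfl fun i _ => ?_
  field_simp [hp i]

end WeightedNorm

section FactorsThrough

variable {α β : Type*} [mβ : MeasurableSpace β] [DiscreteMeasurableSpace β] {f : α → β}

lemma Function.FactorsThrough.measurable_comap {γ : Type*} [MeasurableSpace γ] {g : α → γ}
    (hg : g.FactorsThrough f) : Measurable[mβ.comap f] g := by
  intro s _
  refine ⟨f '' (g ⁻¹' s), .of_discrete, Set.ext fun a => ⟨?_, fun ha => ⟨a, ha, rfl⟩⟩⟩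
  rintro ⟨b, hb, hba⟩
  rw [Set.mem_preimage, ← hg hba]
  exact hb

lemma Function.FactorsThrough.integrable [MeasurableSpace α] [Finite β] {E : Type*}
    [NormedAddCommGroup E] {μ : Measure α} [IsFiniteMeasure μ] {g : α → E}
    (hg : g.FactorsThrough f) (hf : Measurable f) : Integrable g μ := by
  rw [← hg.extend_comp (0 : β → E)]
  exact Integrable.of_finite.comp_measurable hf

end FactorsThrough

theorem condExp_apply_indep_index {Ω ι : Type*} {m₀ mΩ : MeasurableSpace Ω} {P : Measure Ω}
    [IsFiniteMeasure P] [Fintype ι] [MeasurableSpace ι] [MeasurableSingletonClass ι]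
    (hm₀ : m₀ ≤ mΩ) {K : Ω → ι} (hK : Measurable K)
    (hindep : Indep (MeasurableSpace.comap K ‹_›) m₀ P) {a : ι → Ω → ℝ}
    (ha : ∀ i, StronglyMeasurable[m₀] (a i)) (ha_int : ∀ i, Integrable (a i) P) :
    P[fun ω => a (K ω) ω | m₀] =ᵐ[P] fun ω => ∑ i, P.real (K ⁻¹' {i}) * a i ω := by
  classical
  set χ : ι → Ω → ℝ := fun i => (K ⁻¹' {i}).indicator 1
  have hK_fiber : ∀ i, MeasurableSet (K ⁻¹' {i}) := fun i => hK (measurableSet_singleton i)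
  have hχ_int : ∀ i, Integrable (χ i) P := fun i => (integrable_const 1).indicator (hK_fiber i)
  have hχa : ∀ i, χ i * a i = (K ⁻¹' {i}).indicator (a i) := fun i => by
    ext ω; simp [χ, Set.indicator_apply]
  have hχa_int : ∀ i, Integrable (χ i * a i) P := fun i => by
    rw [hχa]; exact (ha_int i).indicator (hK_fiber i)
  have hdecomp : (fun ω => a (K ω) ω) = ∑ i, χ i * a i := by
    ext ω; simp [hχa, Set.indicator_apply]
  have hterm : ∀ i, P[χ i * a i | m₀] =ᵐ[P] fun ω => P.real (K ⁻¹' {i}) * a i ω := fun i => by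
    have hχ_meas : StronglyMeasurable[MeasurableSpace.comap K ‹_›] (χ i) :=
      stronglyMeasurable_const.indicator ⟨{i}, measurableSet_singleton i, rfl⟩
    have hconst : P[χ i | m₀] =ᵐ[P] fun _ => P.real (K ⁻¹' {i}) := by
      have h := condExp_indep_eq hK.comap_le hm₀ hχ_meas hindep
      rwa [integral_indicator_one (hK_fiber i)] at h
    filter_upwards [condExp_mul_of_stronglyMeasurable_right (ha i) (hχa_int i) (hχ_int i),
      hconst] with ω h1 h2
    rw [h1, Pi.mul_apply, h2]
  rw [hdecomp]
  filter_upwards [condExp_finsetSum (fun i _ => hχa_int i) m₀, ae_all_iff.2 hterm] with ω h1 h2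
  rw [h1, Finset.sum_apply]
  exact Finset.sum_congr rfl fun i _ => h2 i

section Past

variable {n : ℕ} {Ω : Type*} [MeasurableSpace Ω] (idx : ℕ → Ω → Fin n)

def pastIdx (k : ℕ) (ω : Ω) : Fin k → Fin n := fun j => idx j ω

lemma pastFiltration_eq_comap (k : ℕ) :
    pastFiltration idx k = MeasurableSpace.comap (pastIdx idx k) inferInstance := by
  simp only [MeasurableSpace.pi, MeasurableSpace.comap_iSup, MeasurableSpace.comap_comp]
  apply le_antisymm
  · exact iSup₂_le fun j hj => le_iSup_of_le ⟨j, Finset.mem_range.mp hj⟩ le_rfl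
  · exact iSup_le fun j => le_iSup₂_of_le (j : ℕ) (Finset.mem_range.mpr j.2) le_rfl

variable {idx}

lemma pastFiltration_le (hidx : ∀ j, Measurable (idx j)) (k : ℕ) :
    pastFiltration idx k ≤ ‹MeasurableSpace Ω› :=
  iSup₂_le fun j _ => (hidx j).comap_le

lemma measurable_pastIdx (hidx : ∀ j, Measurable (idx j)) (k : ℕ) : Measurable (pastIdx idx k) :=
  measurable_pi_lambda _ fun j => hidx j

lemma indep_comap_pastFiltration {P : Measure Ω} (hidx : ∀ j, Measurable (idx j))
    (hiid : iIndepFun idx P) (k : ℕ) :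
    Indep (MeasurableSpace.comap (idx k) ⊤) (pastFiltration idx k) P := by
  have h := indep_iSup_of_disjoint (fun j => (hidx j).comap_le) hiid
    (S := {k}) (T := {j | j < k}) (by simp)
  simp only [Set.mem_singleton_iff, iSup_iSup_eq_left, Set.mem_ofPred_eq] at h
  simp only [pastFiltration, Finset.mem_range]
  exact h

end Past

section Trajectory

variable {n : ℕ} {E : Fin n → Type*} [∀ i, NormedAddCommGroup (E i)] [∀ i, Module ℝ (E i)]
  {Ω : Type*} {idx : ℕ → Ω → Fin n} {d : ℕ → Fin n → ℕ} {γ : Fin n → ℝ} {g : ∀ i, E i → ℝ}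
  {f' : PiLp 2 E → PiLp 2 E} {x0 : PiLp 2 E} {x : ℤ → Ω → PiLp 2 E} {xbar : ℕ → Ω → PiLp 2 E}

structure IsAsyncFBTrajectory (idx : ℕ → Ω → Fin n) (d : ℕ → Fin n → ℕ) (γ : Fin n → ℝ)
    (g : ∀ i, E i → ℝ) (f' : PiLp 2 E → PiLp 2 E) (x0 : PiLp 2 E) (x : ℤ → Ω → PiLp 2 E)
    (xbar : ℕ → Ω → PiLp 2 E) : Prop where
  init : ∀ l : ℤ, l ≤ 0 → ∀ ω, x l ω = x0
  prox : ∀ (k : ℕ) (ω : Ω) (i : Fin n),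
    IsProx (γ i) (g i) (x k ω i - γ i • f' (xhatP x d k ω) i) (xbar k ω i)
  update : ∀ (k : ℕ) (ω : Ω), x ((k : ℤ) + 1) ω = upd (x k ω) (idx k ω) (xbar k ω (idx k ω))

namespace IsAsyncFBTrajectory

variable (hrun : IsAsyncFBTrajectory idx d γ g f' x0 x xbar)
include hrun

lemma xbar_eq_of_iterate_eq {k : ℕ} {ω ω' : Ω} (h : ∀ l : ℤ, l ≤ k → x l ω = x l ω') :
    xbar k ω = xbar k ω' := by
  have hhat : xhatP x d k ω = xhatP x d k ω' := by
    ext j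
    simp only [xhatP, h ((k : ℤ) - d k j) (by omega)]
  ext i
  refine (hrun.prox k ω i).unique ?_
  rw [h k le_rfl, hhat]
  exact hrun.prox k ω' i

lemma iterate_eq_of_idx_eq {ω ω' : Ω} (K : ℕ) (hidx : ∀ j < K, idx j ω = idx j ω') :
    ∀ l : ℤ, l ≤ K → x l ω = x l ω' := by
  induction K with
  | zero => exact fun l hl => by rw [hrun.init l hl, hrun.init l hl]
  | succ K ih =>
    have ih := ih fun j hj => hidx j (by omega)
    intro l hl
    rcases lt_or_eq_of_le hl with hlt | rfl
    · exact ih l (by omega)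
    · push_cast
      rw [hrun.update, hrun.update, ih K le_rfl, hrun.xbar_eq_of_iterate_eq ih, hidx K (by omega)]

lemma iterate_factorsThrough_pastIdx (k : ℕ) : (x k).FactorsThrough (pastIdx idx k) :=
  fun _ _ h => hrun.iterate_eq_of_idx_eq k (fun j hj => congrFun h ⟨j, hj⟩) k le_rfl

lemma xbar_factorsThrough_pastIdx (k : ℕ) : (xbar k).FactorsThrough (pastIdx idx k) :=
  fun _ _ h => hrun.xbar_eq_of_iterate_eq
    (hrun.iterate_eq_of_idx_eq k fun j hj => congrFun h ⟨j, hj⟩)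

theorem condExp_wnormSq_succ_sub [MeasurableSpace Ω] {P : Measure Ω} [IsProbabilityMeasure P]
    (hidx_meas : ∀ k, Measurable (idx k)) (hidx_iid : iIndepFun idx P) {p : Fin n → ℝ}
    (hp_pos : ∀ i, 0 < p i)
    (hp_law : ∀ (k : ℕ) (i : Fin n), P {ω | idx k ω = i} = ENNReal.ofReal (p i))
    (k : ℕ) {z : Ω → PiLp 2 E} (hz : z.FactorsThrough (pastIdx idx k)) :
    P[fun ω => wnormSq (fun i => (p i * γ i)⁻¹) (x ((k : ℤ) + 1) ω - z ω) | pastFiltration idx k]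
      =ᵐ[P] fun ω => wnormSq (fun i => (p i * γ i)⁻¹) (x k ω - z ω)
        + (wnormSq (fun i => (γ i)⁻¹) (xbar k ω - z ω)
          - wnormSq (fun i => (γ i)⁻¹) (x k ω - z ω)) := by
  set a : Fin n → Ω → ℝ := fun i ω =>
    wnormSq (fun i => (p i * γ i)⁻¹) (upd (x k ω) i (xbar k ω i) - z ω) with ha_def
  have ha_fac : ∀ i, (a i).FactorsThrough (pastIdx idx k) := fun i ω ω' h => by
    simp only [ha_def, hrun.iterate_factorsThrough_pastIdx k h,
      hrun.xbar_factorsThrough_pastIdx k h, hz h]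
  have hlaw : ∀ i, P.real (idx k ⁻¹' {i}) = p i := fun i => by
    rw [measureReal_def, ← ENNReal.toReal_ofReal (hp_pos i).le, ← hp_law k i]
    rfl
  have hp_sum : ∑ i, p i = 1 := by
    simp only [← hlaw]
    rw [sum_measureReal_preimage_singleton _ fun i _ => hidx_meas k (measurableSet_singleton i)]
    simp
  have hce := condExp_apply_indep_index (pastFiltration_le hidx_meas k) (hidx_meas k)
    (indep_comap_pastFiltration hidx_meas hidx_iid k) (a := a)
    (fun i => by
      rw [pastFiltration_eq_comap]
      exact (ha_fac i).measurable_comap.stronglyMeasurable)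
    (fun i => (ha_fac i).integrable (measurable_pastIdx hidx_meas k))
  simp only [ha_def, ← hrun.update, hlaw] at hce
  exact hce.trans <| .of_forall fun _ =>
    sum_mul_wnormSq_upd_sub (fun i => (hp_pos i).ne') hp_sum _ _ _

end IsAsyncFBTrajectory

end Trajectory

theorem stmt6_general
    [MeasurableSpace (PiLp 2 H)] [BorelSpace (PiLp 2 H)]
    {Ω : Type*} [MeasurableSpace Ω] (P : Measure Ω) [IsProbabilityMeasure P]
    (idx : ℕ → Ω → Fin m) (hidx_meas : ∀ k : ℕ, Measurable (idx k))
    (hidx_iid : iIndepFun idx P)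
    (p : Fin m → ℝ) (hp_pos : ∀ i, 0 < p i)
    (hp_law : ∀ (k : ℕ) (i : Fin m), P {ω | idx k ω = i} = ENNReal.ofReal (p i))
    (d : ℕ → Fin m → ℕ)
    (γ : Fin m → ℝ)
    (f' : PiLp 2 H → PiLp 2 H)
    (g : ∀ i, H i → ℝ)
    (x : ℤ → Ω → PiLp 2 H) (x0 : PiLp 2 H)
    (hx_init : ∀ n : ℤ, n ≤ 0 → ∀ ω : Ω, x n ω = x0)
    (xbar : ℕ → Ω → PiLp 2 H)
    (hxbar_prox : ∀ (k : ℕ) (ω : Ω) (i : Fin m),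
      IsProx (γ i) (g i) (x (k : ℤ) ω i - γ i • f' (xhatP x d k ω) i) (xbar k ω i))
    (hx_update : ∀ (k : ℕ) (ω : Ω),
      x ((k : ℤ) + 1) ω = upd (x (k : ℤ) ω) (idx k ω) (xbar k ω (idx k ω)))
    (k : ℕ) (y : Ω → PiLp 2 H) (hy : Measurable[pastFiltration idx k] y) :
    ∀ᵐ ω ∂P,
      ((P[(fun ω' => wnormSq (fun i => (p i * γ i)⁻¹) (x ((k : ℤ) + 1) ω' - y ω')
            )|pastFiltration idx k]) ω
          - wnormSq (fun i => (p i * γ i)⁻¹) (x (k : ℤ) ω - y ω)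
        = wnormSq (fun i => (γ i)⁻¹) (xbar k ω - y ω)
          - wnormSq (fun i => (γ i)⁻¹) (x (k : ℤ) ω - y ω)) ∧
      (P[(fun ω' => wnormSq (fun i => (p i * γ i)⁻¹) (x ((k : ℤ) + 1) ω' - x (k : ℤ) ω')
            )|pastFiltration idx k]) ω
        = wnormSq (fun i => (γ i)⁻¹) (xbar k ω - x (k : ℤ) ω) := by
  have hrun : IsAsyncFBTrajectory idx d γ g f' x0 x xbar := ⟨hx_init, hxbar_prox, hx_update⟩
  have hstep := fun (z : Ω → PiLp 2 H) (hz : z.FactorsThrough (pastIdx idx k)) =>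
    hrun.condExp_wnormSq_succ_sub hidx_meas hidx_iid hp_pos hp_law k hz
  have hy_fac : y.FactorsThrough (pastIdx idx k) := by
    rw [pastFiltration_eq_comap] at hy
    exact hy.factorsThrough
  filter_upwards [hstep _ hy_fac, hstep _ (hrun.iterate_factorsThrough_pastIdx k)]
    with ω hy_eq hx_eq
  refine ⟨by rw [hy_eq]; ring, ?_⟩
  rw [hx_eq, sub_self, wnormSq_zero, wnormSq_zero]
  ring

/-- Lemma: conditional expectation of weighted norms. For `y`
measurable w.r.t. `σ(i_0,…,i_{k-1})`, a.s.
`E[‖x^{k+1} - y‖²_W | past] - ‖x^k - y‖²_W = ‖x̄^{k+1} - y‖²_{Γ⁻¹} - ‖x^k - y‖²_{Γ⁻¹}` and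
`E[‖x^{k+1} - x^k‖²_W | past] = ‖x̄^{k+1} - x^k‖²_{Γ⁻¹}`. -/
theorem stmt6
    [∀ i, CompleteSpace (H i)] [∀ i, TopologicalSpace.SeparableSpace (H i)]
    [MeasurableSpace (PiLp 2 H)] [BorelSpace (PiLp 2 H)]
    (hm : 0 < m)
    {Ω : Type*} [MeasurableSpace Ω] (P : Measure Ω) [IsProbabilityMeasure P]
    (idx : ℕ → Ω → Fin m) (hidx_meas : ∀ k : ℕ, Measurable (idx k))
    (hidx_iid : iIndepFun idx P)
    (p : Fin m → ℝ) (hp_pos : ∀ i, 0 < p i)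
    (hp_law : ∀ (k : ℕ) (i : Fin m), P {ω | idx k ω = i} = ENNReal.ofReal (p i))
    (τ : ℕ) (d : ℕ → Fin m → ℕ) (hd : ∀ (k : ℕ) (j : Fin m), d k j ≤ min k τ)
    (γ : Fin m → ℝ) (hγ_pos : ∀ i, 0 < γ i)
    (f : PiLp 2 H → ℝ) (f' : PiLp 2 H → PiLp 2 H)
    (hf_grad : ∀ z : PiLp 2 H, HasGradientAt f (f' z) z)
    (hf_convex : ConvexOn ℝ Set.univ f)
    (g : ∀ i, H i → ℝ) (hg_convex : ∀ i, ConvexOn ℝ Set.univ (g i))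
    (hg_lsc : ∀ i, LowerSemicontinuous (g i))
    (x : ℤ → Ω → PiLp 2 H) (x0 : PiLp 2 H)
    (hx_init : ∀ n : ℤ, n ≤ 0 → ∀ ω : Ω, x n ω = x0)
    (xbar : ℕ → Ω → PiLp 2 H)
    (hxbar_prox : ∀ (k : ℕ) (ω : Ω) (i : Fin m),
      IsProx (γ i) (g i) (x (k : ℤ) ω i - γ i • f' (xhatP x d k ω) i) (xbar k ω i))
    (hx_update : ∀ (k : ℕ) (ω : Ω),
      x ((k : ℤ) + 1) ω = upd (x (k : ℤ) ω) (idx k ω) (xbar k ω (idx k ω)))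
    (k : ℕ) (y : Ω → PiLp 2 H) (hy : Measurable[pastFiltration idx k] y) :
    ∀ᵐ ω ∂P,
      ((P[(fun ω' => wnormSq (fun i => (p i * γ i)⁻¹) (x ((k : ℤ) + 1) ω' - y ω')
            )|pastFiltration idx k]) ω
          - wnormSq (fun i => (p i * γ i)⁻¹) (x (k : ℤ) ω - y ω)
        = wnormSq (fun i => (γ i)⁻¹) (xbar k ω - y ω)
          - wnormSq (fun i => (γ i)⁻¹) (x (k : ℤ) ω - y ω)) ∧
      (P[(fun ω' => wnormSq (fun i => (p i * γ i)⁻¹) (x ((k : ℤ) + 1) ω' - x (k : ℤ) ω')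
            )|pastFiltration idx k]) ω
        = wnormSq (fun i => (γ i)⁻¹) (xbar k ω - x (k : ℤ) ω) :=
  stmt6_general P idx hidx_meas hidx_iid p hp_pos hp_law d γ f' g x x0 hx_init xbar hxbar_prox
    hx_update k y hy
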